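/- If e_i is an eigenvector of a symmetric endomorphism S with eigenvalue κ_i, then e_i is an eigenvector of the Newton transformation P_k = Σ_{j=0}^k (−1)^j s_{k−j} S^j with eigenvalue μ_{i,k} = Σ_{i_1<...<i_k, i_j ≠ i} κ_{i_1}···κ_{i_k}, the k-th elementary symmetric function of the eigenvalues other than κ_i. -/

import Mathlib

/-!
On the eigenvector `e_i` the Newton transformation `P_k` acts by the scalar
`∑_{j ≤ k} (-1)^j s_{k-j} κ_i^j`. Splitting `κ_i` off the list of eigenvalues gives the Pascal
recursion `s_{m+1} = μ_{i,m+1} + κ_i μ_{i,m}`, under which this alternating sum telescopes to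
`μ_{i,k}`.
-/

open Finset

/-- The `k`-th elementary symmetric function of `κ₁, …, κₙ`. -/
noncomputable def esymm (n : ℕ) (κ : Fin n → ℝ) (k : ℕ) : ℝ :=
  ∑ s ∈ (Finset.univ : Finset (Fin n)).powersetCard k, ∏ i ∈ s, κ i

theorem Module.End.sum_smul_pow_apply_of_apply_eq_smul {R M : Type*} [CommRing R]
    [AddCommGroup M] [Module R M] {f : Module.End R M} {μ : R} {v : M} (hv : f v = μ • v)
    (s : Finset ℕ) (c : ℕ → R) :
    (∑ j ∈ s, c j • f ^ j) v = (∑ j ∈ s, c j * μ ^ j) • v := by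
  have hpow (j : ℕ) : (f ^ j) v = μ ^ j • v := by
    simpa using Module.End.aeval_apply_of_mem_apply_eq_smul (p := Polynomial.X ^ j) hv
  simp only [LinearMap.sum_apply, LinearMap.smul_apply, hpow, smul_smul, sum_smul]

namespace Multiset

theorem esymm_cons_succ {R : Type*} [CommSemiring R] (a : R) (s : Multiset R) (m : ℕ) :
    (a ::ₘ s).esymm (m + 1) = s.esymm (m + 1) + a * s.esymm m := by
  simp [esymm, powersetCard_cons, sum_map_mul_left]

theorem sum_range_neg_one_pow_mul_esymm_cons_mul_pow {R : Type*} [CommRing R] (a : R)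
    (s : Multiset R) (k : ℕ) :
    ∑ j ∈ Finset.range (k + 1), (-1) ^ j * (a ::ₘ s).esymm (k - j) * a ^ j = s.esymm k := by
  induction k with
  | zero => simp [esymm]
  | succ k ih =>
    rw [Finset.sum_range_succ']
    have hshift : ∀ j ∈ Finset.range (k + 1),
        (-1) ^ (j + 1) * (a ::ₘ s).esymm (k + 1 - (j + 1)) * a ^ (j + 1) =
          -a * ((-1) ^ j * (a ::ₘ s).esymm (k - j) * a ^ j) := by
      intro j _
      rw [Nat.add_sub_add_right]
      ring
    rw [Finset.sum_congr rfl hshift, ← Finset.mul_sum, ih, Nat.sub_zero, esymm_cons_succ]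
    ring

end Multiset

theorem Finset.sum_range_neg_one_pow_mul_esymm_mul_pow {ι R : Type*} [CommRing R]
    [DecidableEq ι] {s : Finset ι} {i : ι} (hi : i ∈ s) (κ : ι → R) (k : ℕ) :
    ∑ j ∈ range (k + 1), (-1) ^ j * (∑ t ∈ s.powersetCard (k - j), ∏ l ∈ t, κ l) * κ i ^ j =
      ∑ t ∈ (s.erase i).powersetCard k, ∏ l ∈ t, κ l := by
  have hcons : s.val.map κ = κ i ::ₘ (s.erase i).val.map κ := by
    rw [erase_val, ← Multiset.map_cons, Multiset.cons_erase hi]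
  simp only [← esymm_map_val, hcons]
  exact Multiset.sum_range_neg_one_pow_mul_esymm_cons_mul_pow _ _ k

theorem newton_eigenvector_general {E : Type*} [NormedAddCommGroup E]
    [InnerProductSpace ℝ E] (n : ℕ) (k : ℕ) (S : E →ₗ[ℝ] E)
    (b : OrthonormalBasis (Fin n) ℝ E) (κ : Fin n → ℝ)
    (hb : ∀ i, S (b i) = κ i • b i) (i : Fin n) :
    (∑ j ∈ Finset.range (k + 1), ((-1 : ℝ) ^ j * esymm n κ (k - j)) • S ^ j) (b i) =
      (∑ s ∈ (Finset.univ.erase i).powersetCard k, ∏ j ∈ s, κ j) • b i := by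
  rw [Module.End.sum_smul_pow_apply_of_apply_eq_smul (hb i),
    ← sum_range_neg_one_pow_mul_esymm_mul_pow (mem_univ i)]
  rfl

/-- If `e_i` is an eigenvector of the symmetric endomorphism `S` with eigenvalue `κ_i`
(for an orthonormal eigenbasis `e₁, …, eₙ`), then `e_i` is an eigenvector of the Newton
transformation `P_k = Σ_{j=0}^k (−1)^j s_{k−j} S^j` with eigenvalue
`μ_{i,k} = Σ_{i₁<⋯<i_k, i_j ≠ i} κ_{i₁} ⋯ κ_{i_k}`. -/
theorem newton_eigenvector {E : Type*} [NormedAddCommGroup E]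
    [InnerProductSpace ℝ E] [FiniteDimensional ℝ E] (n : ℕ)
    (hdim : Module.finrank ℝ E = n) (k : ℕ) (hk : k ≤ n - 1)
    (S : E →ₗ[ℝ] E) (hS : LinearMap.IsSymmetric S)
    (b : OrthonormalBasis (Fin n) ℝ E) (κ : Fin n → ℝ)
    (hb : ∀ i, S (b i) = κ i • b i) (i : Fin n) :
    (∑ j ∈ Finset.range (k + 1), ((-1 : ℝ) ^ j * esymm n κ (k - j)) • S ^ j) (b i) =
      (∑ s ∈ (Finset.univ.erase i).powersetCard k, ∏ j ∈ s, κ j) • b i :=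
  newton_eigenvector_general n k S b κ hb i
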